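/- arXiv:1902.00107 — 3 statements merged into one kernel-verified Lean document; each statement's English description precedes it below -/
import Mathlib

section
/- Let Z be hypergeometrically distributed with parameters n, m, r. Then for every natural number z with z ≥ r/2, P(Z = z) ≤ (4m/n)^z. -/
/-! Since `C(n,r) C(r,z) = C(n,z) C(n-z,r-z)`, the probability equals
`C(r,z) · (C(m,z) / C(n,z)) · (C(n-m,r-z) / C(n-z,r-z))`. The first ratio is a product of
`z` factors `(m-i)/(n-i) ≤ m/n`, the second is at most `1`, and `C(r,z) ≤ 2^r ≤ 4^z`
when `r ≤ 2z`. -/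

namespace Nat

theorem pow_mul_descFactorial_le_pow_mul_descFactorial {m n : ℕ} (hmn : m ≤ n) (k : ℕ) :
    n ^ k * m.descFactorial k ≤ m ^ k * n.descFactorial k := by
  induction k with
  | zero => simp
  | succ k ih =>
    have hstep : n * (m - k) ≤ m * (n - k) := by
      rw [Nat.mul_sub, Nat.mul_sub, Nat.mul_comm n m]
      exact Nat.sub_le_sub_left (Nat.mul_le_mul_right k hmn) _
    calc n ^ (k + 1) * m.descFactorial (k + 1)
        = n * (m - k) * (n ^ k * m.descFactorial k) := by
          rw [descFactorial_succ, pow_succ]; ring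
      _ ≤ m * (n - k) * (m ^ k * n.descFactorial k) := Nat.mul_le_mul hstep ih
      _ = m ^ (k + 1) * n.descFactorial (k + 1) := by
          rw [descFactorial_succ, pow_succ]; ring

theorem pow_mul_choose_le_pow_mul_choose {m n : ℕ} (hmn : m ≤ n) (k : ℕ) :
    n ^ k * m.choose k ≤ m ^ k * n.choose k := by
  have h := pow_mul_descFactorial_le_pow_mul_descFactorial hmn k
  rw [descFactorial_eq_factorial_mul_choose, descFactorial_eq_factorial_mul_choose] at h
  refine Nat.le_of_mul_le_mul_left ?_ (factorial_pos k)
  convert h using 1 <;> ring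

theorem pow_mul_choose_mul_choose_sub_le {m n r k : ℕ} (hmn : m ≤ n) (hkm : k ≤ m)
    (hkr : k ≤ r) :
    n ^ k * (m.choose k * (n - m).choose (r - k)) ≤ r.choose k * m ^ k * n.choose r :=
  calc n ^ k * (m.choose k * (n - m).choose (r - k))
      = n ^ k * m.choose k * (n - m).choose (r - k) := by ring
    _ ≤ m ^ k * n.choose k * (n - k).choose (r - k) :=
        Nat.mul_le_mul (pow_mul_choose_le_pow_mul_choose hmn k) (choose_le_choose _ (by omega))
    _ = r.choose k * m ^ k * n.choose r := by rw [mul_assoc, ← choose_mul hkr]; ring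

theorem choose_le_four_pow {r k : ℕ} (h : r ≤ 2 * k) : r.choose k ≤ 4 ^ k :=
  calc r.choose k ≤ 2 ^ r := choose_le_two_pow r k
    _ ≤ 2 ^ (2 * k) := Nat.pow_le_pow_right two_pos h
    _ = 4 ^ k := by rw [pow_mul]; norm_num

theorem cast_choose_mul_choose_sub_div_choose_le {m n r k : ℕ} (hn : 0 < n) (hmn : m ≤ n)
    (hkm : k ≤ m) (hkr : k ≤ r) :
    (m.choose k * (n - m).choose (r - k) : ℝ) / n.choose r ≤ r.choose k * ((m : ℝ) / n) ^ k := by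
  apply div_le_of_le_mul₀ (by positivity) (by positivity)
  rw [div_pow, mul_div_assoc', div_mul_eq_mul_div, le_div_iff₀ (by positivity), mul_comm]
  exact_mod_cast pow_mul_choose_mul_choose_sub_le hmn hkm hkr

end Nat

theorem hypergeometric_pmf_le_four_general (n m r : ℕ) (hn : 0 < n) (hmn : m ≤ n)
    (P : ℕ → ℝ)
    (hP : ∀ z : ℕ, P z =
      if z ≤ m ∧ z ≤ r then
        (Nat.choose m z * Nat.choose (n - m) (r - z) : ℝ) / Nat.choose n r
      else 0) :
    ∀ z : ℕ, r ≤ 2 * z → P z ≤ (4 * (m : ℝ) / n) ^ z := by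
  intro z hz
  rw [hP z]
  split_ifs with h
  · calc _ ≤ r.choose z * ((m : ℝ) / n) ^ z :=
          Nat.cast_choose_mul_choose_sub_div_choose_le hn hmn h.1 h.2
      _ ≤ 4 ^ z * ((m : ℝ) / n) ^ z := by gcongr; exact_mod_cast Nat.choose_le_four_pow hz
      _ = (4 * (m : ℝ) / n) ^ z := by rw [← mul_pow, mul_div_assoc]
  · positivity

/-- Tail inequality for hypergeometric variables (second form): if `P` is the
probability mass function of the hypergeometric distribution with parameters
`n`, `m`, `r`, then for every `z ≥ r/2` we have `P(Z = z) ≤ (4m/n)^z`. -/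
theorem hypergeometric_pmf_le_four (n m r : ℕ) (hn : 0 < n) (hmn : m ≤ n) (hrn : r ≤ n)
    (P : ℕ → ℝ)
    (hP : ∀ z : ℕ, P z =
      if z ≤ m ∧ z ≤ r then
        (Nat.choose m z * Nat.choose (n - m) (r - z) : ℝ) / Nat.choose n r
      else 0) :
    ∀ z : ℕ, r ≤ 2 * z → P z ≤ (4 * (m : ℝ) / n) ^ z :=
  hypergeometric_pmf_le_four_general n m r hn hmn P hP
end

section
/- Let Z be hypergeometric with parameters n, m, r with s ≤ m ≤ n/2 and 1 ≤ r ≤ n. Then P(2Z − r + s − m > 0) ≤ exp(−(m−s)²/(2r)). -/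
/-!
Chernoff bound: for `y = eᵗ ≥ 1`, `P(Z ≥ k) ≤ y⁻ᵏ E[y ^ Z]`. Chvátal's comparison
`E[y ^ Z] ≤ (1 + p (y - 1)) ^ r` with `p = m / n` bounds the hypergeometric moment generating
function by the binomial one, and Hoeffding's lemma gives `1 - p + p eᵗ ≤ exp (p t + t² / 8)`.
With `t = 4 (k - r p) / r` this yields `P(Z ≥ k) ≤ exp (-2 (k - r p)² / r)`. The event
`2Z - r + s - m > 0` is `Z ≥ k` for `k = ⌊(r + m - s) / 2⌋ + 1`, and `p ≤ 1/2` gives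
`k - r p ≥ (m - s) / 2`.
-/

open Finset MeasureTheory ProbabilityTheory Real

theorem Nat.choose_mul_pow_le_choose_mul_pow {m n : ℕ} (h : m ≤ n) (j : ℕ) :
    m.choose j * n ^ j ≤ n.choose j * m ^ j := by
  induction j with
  | zero => simp
  | succ j ih =>
    have key : (m - j) * n ≤ (n - j) * m := by
      rw [Nat.sub_mul, Nat.sub_mul, mul_comm n m]
      exact Nat.sub_le_sub_left (Nat.mul_le_mul_left j h) _
    refine Nat.le_of_mul_le_mul_right (c := j + 1) ?_ j.succ_pos
    calc m.choose (j + 1) * n ^ (j + 1) * (j + 1)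
        = m.choose j * n ^ j * ((m - j) * n) := by
          rw [mul_right_comm _ _ (j + 1), Nat.choose_succ_right_eq]; ring
      _ ≤ n.choose j * m ^ j * ((n - j) * m) := Nat.mul_le_mul ih key
      _ = n.choose (j + 1) * m ^ (j + 1) * (j + 1) := by
          rw [mul_right_comm _ _ (j + 1), Nat.choose_succ_right_eq]; ring

theorem Nat.sum_range_choose_mul_choose_mul_choose {m n r j : ℕ} (hmn : m ≤ n) (hjr : j ≤ r) :
    ∑ z ∈ range (r + 1), m.choose z * z.choose j * (n - m).choose (r - z)
      = m.choose j * (n - j).choose (r - j) := by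
  obtain ⟨i, rfl⟩ := Nat.exists_eq_add_of_le hjr
  rw [show j + i + 1 = j + (i + 1) by ring, sum_range_add, Nat.add_sub_cancel_left]
  have hlow : ∑ z ∈ range j, m.choose z * z.choose j * (n - m).choose (j + i - z) = 0 :=
    sum_eq_zero fun z hz ↦ by rw [Nat.choose_eq_zero_of_lt (mem_range.1 hz)]; simp
  rcases le_or_gt j m with hjm | hjm
  · have hvandermonde := Nat.add_choose_eq (m - j) (n - m) i
    rw [show m - j + (n - m) = n - j by omega, Nat.sum_antidiagonal_eq_sum_range_succ_mk]
      at hvandermonde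
    rw [hlow, zero_add, hvandermonde, mul_sum]
    refine sum_congr rfl fun z _ ↦ ?_
    rw [Nat.choose_mul (Nat.le_add_right j z), Nat.add_sub_cancel_left,
      show j + i - (j + z) = i - z by omega, mul_assoc]
  · rw [hlow, zero_add, Nat.choose_eq_zero_of_lt hjm, zero_mul]
    exact sum_eq_zero fun z _ ↦ by rw [Nat.choose_eq_zero_of_lt (by omega : m < j + z)]; simp

theorem pow_eq_sum_range_choose_mul_sub_one_pow {z r : ℕ} (hzr : z ≤ r) (y : ℝ) :
    y ^ z = ∑ j ∈ range (r + 1), z.choose j * (y - 1) ^ j := by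
  conv_lhs => rw [← sub_add_cancel y 1, add_pow]
  refine sum_subset (range_subset_range.2 (by omega)) (fun j _ hj ↦ ?_) |>.trans (sum_congr rfl ?_)
  · rw [Nat.choose_eq_zero_of_lt (by simpa using hj)]; simp
  · intro j _; rw [one_pow, mul_one, mul_comm]

theorem choose_mul_choose_sub_le {m n r j : ℕ} (hmn : m ≤ n) (hn : 0 < n) (hjr : j ≤ r) :
    (m.choose j * (n - j).choose (r - j) : ℝ) ≤ n.choose r * r.choose j * (m / n : ℝ) ^ j := by
  have hcast : (n.choose r * r.choose j : ℝ) = n.choose j * (n - j).choose (r - j) := by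
    exact_mod_cast Nat.choose_mul hjr
  have hpow : (m.choose j : ℝ) ≤ n.choose j * (m / n : ℝ) ^ j := by
    rw [div_pow, ← mul_div_assoc, le_div_iff₀ (by positivity)]
    exact_mod_cast Nat.choose_mul_pow_le_choose_mul_pow hmn j
  rw [hcast, mul_right_comm]
  gcongr

/-- Chvátal's bound `E[y ^ Z] ≤ (1 + p (y - 1)) ^ r`. Expanding `y ^ z = ∑ C(z, j) (y - 1) ^ j`
reduces it to comparing the factorial moments `E[C(Z, j)] = C(m, j) C(n - j, r - j) / C(n, r)`
with the binomial ones `C(r, j) p ^ j`. -/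
theorem sum_range_choose_mul_choose_mul_pow_le {n m r : ℕ} (hmn : m ≤ n) (hn : 0 < n)
    {y : ℝ} (hy : 1 ≤ y) :
    ∑ z ∈ range (r + 1), (m.choose z * (n - m).choose (r - z) : ℝ) * y ^ z
      ≤ n.choose r * (1 + m / n * (y - 1)) ^ r := by
  calc ∑ z ∈ range (r + 1), (m.choose z * (n - m).choose (r - z) : ℝ) * y ^ z
      = ∑ j ∈ range (r + 1), ∑ z ∈ range (r + 1),
          (m.choose z * z.choose j * (n - m).choose (r - z) : ℝ) * (y - 1) ^ j := by
        rw [sum_comm]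
        refine sum_congr rfl fun z hz ↦ ?_
        rw [pow_eq_sum_range_choose_mul_sub_one_pow (Nat.lt_succ_iff.1 (mem_range.1 hz)), mul_sum]
        exact sum_congr rfl fun j _ ↦ by ring
    _ = ∑ j ∈ range (r + 1), (m.choose j * (n - j).choose (r - j) : ℝ) * (y - 1) ^ j := by
        refine sum_congr rfl fun j hj ↦ ?_
        rw [← sum_mul]
        congr 1
        exact_mod_cast
          Nat.sum_range_choose_mul_choose_mul_choose hmn (Nat.lt_succ_iff.1 (mem_range.1 hj))
    _ ≤ ∑ j ∈ range (r + 1), (n.choose r * r.choose j * (m / n : ℝ) ^ j) * (y - 1) ^ j := by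
        refine sum_le_sum fun j hj ↦ mul_le_mul_of_nonneg_right ?_ (pow_nonneg (by linarith) j)
        exact choose_mul_choose_sub_le hmn hn (Nat.lt_succ_iff.1 (mem_range.1 hj))
    _ = n.choose r * (1 + m / n * (y - 1)) ^ r := by
        rw [add_comm 1, add_pow, mul_sum]
        exact sum_congr rfl fun j _ ↦ by rw [one_pow, mul_one, mul_pow]; ring

theorem one_sub_add_mul_exp_le_exp {p : ℝ} (hp0 : 0 ≤ p) (hp1 : p ≤ 1) (t : ℝ) :
    1 - p + p * exp t ≤ exp (p * t + t ^ 2 / 8) := by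
  set ν : Measure ℝ := ENNReal.ofReal (1 - p) • .dirac 0 + ENNReal.ofReal p • .dirac 1
  have hν (f : ℝ → ℝ) : ∫ x, f x ∂ν = (1 - p) * f 0 + p * f 1 := by
    have hint (a c : ℝ) : Integrable f (ENNReal.ofReal c • .dirac a) :=
      (integrable_dirac enorm_lt_top).smul_measure ENNReal.ofReal_ne_top
    rw [integral_add_measure (hint _ _) (hint _ _), integral_smul_measure, integral_smul_measure,
      integral_dirac, integral_dirac, ENNReal.toReal_ofReal (by linarith),
      ENNReal.toReal_ofReal hp0, smul_eq_mul, smul_eq_mul]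
  have : IsProbabilityMeasure ν := by
    constructor
    simp only [ν, Measure.add_apply, Measure.smul_apply, measure_univ, smul_eq_mul, mul_one]
    rw [← ENNReal.ofReal_add (by linarith) hp0]
    simp
  have hsupport : ∀ᵐ x ∂ν, x ∈ Set.Icc (0 : ℝ) 1 := by
    rw [ae_add_measure_iff]
    constructor <;>
      exact Measure.ae_smul_measure ((ae_dirac_iff measurableSet_Icc).2 (by norm_num)) _
  have hmean : ν[id] = p := by simp [hν]
  have h := (hasSubgaussianMGF_of_mem_Icc aemeasurable_id hsupport).mgf_le t
  rw [hmean, mgf, hν] at h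
  norm_num at h
  calc 1 - p + p * exp t = ((1 - p) * exp (-(t * p)) + p * exp (t * (1 - p))) * exp (p * t) := by
        rw [add_mul, mul_assoc, mul_assoc, ← exp_add, ← exp_add, show -(t * p) + p * t = 0 by ring,
          show t * (1 - p) + p * t = t by ring, exp_zero, mul_one]
    _ ≤ exp (1 / 4 * t ^ 2 / 2) * exp (p * t) := by gcongr
    _ = exp (p * t + t ^ 2 / 8) := by rw [← exp_add]; ring_nf

theorem sum_Icc_le_inv_pow_mul_sum_range {w : ℕ → ℝ} (hw : ∀ z, 0 ≤ w z) {y : ℝ} (hy : 1 ≤ y)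
    (k r : ℕ) :
    ∑ z ∈ Icc k r, w z ≤ (y ^ k)⁻¹ * ∑ z ∈ range (r + 1), w z * y ^ z := by
  have hyk : 0 < y ^ k := by positivity
  rw [mul_sum]
  calc ∑ z ∈ Icc k r, w z ≤ ∑ z ∈ Icc k r, (y ^ k)⁻¹ * (w z * y ^ z) := by
        refine sum_le_sum fun z hz ↦ ?_
        rw [mul_left_comm, ← div_eq_inv_mul]
        exact le_mul_of_one_le_right (hw z)
          ((one_le_div hyk).2 (pow_le_pow_right₀ hy (mem_Icc.1 hz).1))
    _ ≤ ∑ z ∈ range (r + 1), (y ^ k)⁻¹ * (w z * y ^ z) :=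
        sum_le_sum_of_subset_of_nonneg (fun z hz ↦ by simp only [mem_Icc, mem_range] at hz ⊢; omega)
          fun z _ _ ↦ by have := hw z; positivity

theorem hypergeometric_tail_le {n m r k : ℕ} (hmn : m ≤ n) (hrn : r ≤ n) (hr : 0 < r)
    (hk : r * (m / n : ℝ) ≤ k) :
    ∑ z ∈ Icc k r, (m.choose z * (n - m).choose (r - z) : ℝ) / n.choose r
      ≤ exp (-(2 * (k - r * (m / n : ℝ)) ^ 2 / r)) := by
  have hn : 0 < n := hr.trans_le hrn
  set p : ℝ := m / n
  have hp0 : 0 ≤ p := by positivity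
  have hp1 : p ≤ 1 := div_le_one_of_le₀ (by exact_mod_cast hmn) (by positivity)
  set Δ : ℝ := k - r * p
  set t : ℝ := 4 * Δ / r
  have ht : 0 ≤ t := by have : 0 ≤ Δ := sub_nonneg.2 hk; positivity
  have hy : 1 ≤ exp t := one_le_exp ht
  have hC : (n.choose r : ℝ) ≠ 0 := by exact_mod_cast (Nat.choose_pos hrn).ne'
  calc ∑ z ∈ Icc k r, (m.choose z * (n - m).choose (r - z) : ℝ) / n.choose r
      ≤ (exp t ^ k)⁻¹ * ∑ z ∈ range (r + 1),
          (m.choose z * (n - m).choose (r - z) : ℝ) / n.choose r * exp t ^ z :=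
        sum_Icc_le_inv_pow_mul_sum_range (fun z ↦ by positivity) hy k r
    _ = (exp t ^ k)⁻¹ * (∑ z ∈ range (r + 1),
          (m.choose z * (n - m).choose (r - z) : ℝ) * exp t ^ z) / n.choose r := by
        rw [mul_div_assoc, sum_div]
        exact congrArg _ (sum_congr rfl fun z _ ↦ by ring)
    _ ≤ (exp t ^ k)⁻¹ * (n.choose r * (1 + p * (exp t - 1)) ^ r) / n.choose r := by
        gcongr
        exact sum_range_choose_mul_choose_mul_pow_le hmn hn hy
    _ = (exp t ^ k)⁻¹ * (1 - p + p * exp t) ^ r := by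
        field_simp
        ring
    _ ≤ (exp t ^ k)⁻¹ * exp (p * t + t ^ 2 / 8) ^ r := by
        gcongr
        exact one_sub_add_mul_exp_le_exp hp0 hp1 t
    _ = exp (r * (p * t + t ^ 2 / 8) - k * t) := by
        rw [← exp_nat_mul, ← exp_nat_mul, ← exp_neg, ← exp_add]
        ring_nf
    _ = exp (-(2 * Δ ^ 2 / r)) := by
        congr 1
        simp only [t, Δ]
        field_simp
        ring

theorem hypergeometric_tail_le_exp {n m r s k : ℕ} (hsm : s ≤ m) (hm : 2 * m ≤ n) (hr : 0 < r)
    (hrn : r ≤ n) (hk : r + (m - s) < 2 * k) :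
    ∑ z ∈ Icc k r, (m.choose z * (n - m).choose (r - z) : ℝ) / n.choose r
      ≤ exp (-(((m : ℝ) - s) ^ 2 / (2 * r))) := by
  have hk' : (r + ((m : ℝ) - s)) / 2 < k := by
    have := (Nat.cast_lt (α := ℝ)).2 hk
    push_cast [Nat.cast_sub hsm] at this
    linarith
  have hp : (m / n : ℝ) ≤ 1 / 2 := by
    rw [div_le_iff₀ (by exact_mod_cast hr.trans_le hrn)]
    have : (2 * m : ℝ) ≤ n := by exact_mod_cast hm
    linarith
  have hrp : r * (m / n : ℝ) ≤ r / 2 := by nlinarith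
  have hsm' : (s : ℝ) ≤ m := by exact_mod_cast hsm
  refine (hypergeometric_tail_le (by omega) hrn hr (by linarith)).trans
    (exp_le_exp.2 (neg_le_neg ?_))
  calc ((m : ℝ) - s) ^ 2 / (2 * r) ≤ (2 * (k - r * (m / n : ℝ))) ^ 2 / (2 * r) := by
        gcongr; linarith
    _ = 2 * (k - r * (m / n : ℝ)) ^ 2 / r := by field_simp

theorem measureReal_setOf_le_le_sum_Icc {Ω : Type*} [MeasurableSpace Ω] {μ : Measure Ω}
    [IsFiniteMeasure μ] {Z : Ω → ℕ} {r : ℕ} (h : ∀ z, r < z → μ {ω | Z ω = z} = 0) (k : ℕ) :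
    μ.real {ω | k ≤ Z ω} ≤ ∑ z ∈ Icc k r, μ.real {ω | Z ω = z} := by
  have htail : μ {ω | r < Z ω} = 0 := by
    have : {ω | r < Z ω} = ⋃ z ∈ Set.Ioi r, {ω | Z ω = z} := by ext; simp
    rw [this, measure_biUnion_null_iff (Set.to_countable _)]
    exact h
  calc μ.real {ω | k ≤ Z ω} ≤ μ.real ((⋃ z ∈ Icc k r, {ω | Z ω = z}) ∪ {ω | r < Z ω}) := by
        refine measureReal_mono fun ω (hω : k ≤ Z ω) ↦ ?_
        rcases le_or_gt (Z ω) r with hZr | hZr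
        · exact Or.inl (Set.mem_biUnion (mem_Icc.2 ⟨hω, hZr⟩) rfl)
        · exact Or.inr hZr
    _ ≤ μ.real (⋃ z ∈ Icc k r, {ω | Z ω = z}) + μ.real {ω | r < Z ω} := measureReal_union_le _ _
    _ ≤ ∑ z ∈ Icc k r, μ.real {ω | Z ω = z} := by
        rw [(measureReal_eq_zero_iff).2 htail, add_zero]
        exact measureReal_biUnion_finset_le _ _

theorem progress_positive_prob_le_general {Ω : Type*} [MeasurableSpace Ω]
    (μ : Measure Ω) [IsProbabilityMeasure μ]
    (n m r s : ℕ) (hsm : s ≤ m) (hm : 2 * m ≤ n) (hr1 : 1 ≤ r) (hrn : r ≤ n)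
    (Z : Ω → ℕ)
    (hZ : ∀ z : ℕ, (μ {ω | Z ω = z}).toReal =
      if z ≤ m ∧ z ≤ r then
        (Nat.choose m z * Nat.choose (n - m) (r - z) : ℝ) / Nat.choose n r
      else 0) :
    (μ {ω | 0 < 2 * (Z ω : ℤ) - r + s - m}).toReal
      ≤ Real.exp (-(((m : ℝ) - s) ^ 2 / (2 * r))) := by
  set k := (r + (m - s)) / 2 + 1
  have hevent : {ω | 0 < 2 * (Z ω : ℤ) - r + s - m} = {ω | k ≤ Z ω} :=
    Set.ext fun ω ↦ by simp only [Set.mem_ofPred_eq, k]; omega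
  have hnull (z : ℕ) (hz : r < z) : μ {ω | Z ω = z} = 0 := by
    rw [← measureReal_eq_zero_iff, measureReal_def, hZ, if_neg (by omega)]
  have hpmf (z : ℕ) (hz : z ≤ r) : μ.real {ω | Z ω = z}
      = (m.choose z * (n - m).choose (r - z) : ℝ) / n.choose r := by
    rw [measureReal_def, hZ]
    split_ifs
    · rfl
    · rw [Nat.choose_eq_zero_of_lt (by omega), Nat.cast_zero, zero_mul, zero_div]
  calc (μ {ω | 0 < 2 * (Z ω : ℤ) - r + s - m}).toReal = μ.real {ω | k ≤ Z ω} := by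
        rw [hevent]; rfl
    _ ≤ ∑ z ∈ Icc k r, μ.real {ω | Z ω = z} := measureReal_setOf_le_le_sum_Icc hnull k
    _ = ∑ z ∈ Icc k r, (m.choose z * (n - m).choose (r - z) : ℝ) / n.choose r :=
        sum_congr rfl fun z hz ↦ hpmf z (mem_Icc.1 hz).2
    _ ≤ exp (-(((m : ℝ) - s) ^ 2 / (2 * r))) :=
        hypergeometric_tail_le_exp hsm hm hr1 hrn (by omega)

/-- Lemma 6: let `Z` be hypergeometric with parameters `n`, `m`, `r` with
`s ≤ m ≤ n/2` and `1 ≤ r ≤ n`. Then `P(2Z − r + s − m > 0) ≤ exp(−(m−s)²/(2r))`. -/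
theorem progress_positive_prob_le {Ω : Type*} [MeasurableSpace Ω]
    (μ : Measure Ω) [IsProbabilityMeasure μ]
    (n m r s : ℕ) (hsm : s ≤ m) (hm : 2 * m ≤ n) (hr1 : 1 ≤ r) (hrn : r ≤ n)
    (Z : Ω → ℕ) (hZmeas : Measurable Z)
    (hZ : ∀ z : ℕ, (μ {ω | Z ω = z}).toReal =
      if z ≤ m ∧ z ≤ r then
        (Nat.choose m z * Nat.choose (n - m) (r - z) : ℝ) / Nat.choose n r
      else 0) :
    (μ {ω | 0 < 2 * (Z ω : ℤ) - r + s - m}).toReal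
      ≤ Real.exp (-(((m : ℝ) - s) ^ 2 / (2 * r))) :=
  progress_positive_prob_le_general μ n m r s hsm hm hr1 hrn Z hZ
end

section
/- Additive drift upper bound: let (X_t) be a stochastic process on {0} ∪ [x_min, x_max] adapted to a filtration with x_min > 0, g as above, and suppose E[g(X_t) − g(X_{t+1}) | F_t, X_t ≥ x_min] ≥ α for some α > 0. Then E[T_0 | X_0] ≤ g(X_0)/α, where T_0 = min{t : X_t = 0}. -/
open MeasureTheory Finset
open scoped ENNReal

/-! The potential `g(X_t)`, frozen at `0` once the process has hit `0`, is nonnegative, starts at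
`g(x0)`, and loses in expectation at least `α` at every step on the survival event
`{X_0, …, X_t ≠ 0}`. Summing these losses over the first `n` steps bounds
`α ∑_{t<n} P(T_0 > t)` by `g(x0)`, and the tail-sum formula `E[T_0] ≤ ∑_t P(T_0 > t)`
concludes. -/

section

variable {Ω : Type*}

def survivalSet (S : ℕ → Set Ω) (t : ℕ) : Set Ω := {ω | ∀ s ≤ t, ω ∉ S s}

@[simp]
lemma mem_survivalSet {S : ℕ → Set Ω} {t : ℕ} {ω : Ω} :
    ω ∈ survivalSet S t ↔ ∀ s ≤ t, ω ∉ S s := Iff.rfl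

lemma measurableSet_survivalSet {m0 : MeasurableSpace Ω} (F : Filtration ℕ m0)
    {S : ℕ → Set Ω} (hS : ∀ t, MeasurableSet[F t] (S t)) (t : ℕ) :
    MeasurableSet[F t] (survivalSet S t) := by
  simp only [survivalSet, Set.ofPred_forall]
  exact .iInter fun s => .iInter fun hs => F.mono hs _ (hS s).compl

lemma iInf_hitting_le_tsum_indicator_survivalSet (S : ℕ → Set Ω) (ω : Ω) :
    ⨅ t ∈ {t | ω ∈ S t}, (t : ℝ≥0∞) ≤ ∑' t, (survivalSet S t).indicator 1 ω := by
  classical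
  by_cases hhit : ∃ t, ω ∈ S t
  · have hsurv : ∀ t < Nat.find hhit, ω ∈ survivalSet S t := fun t ht s hs =>
      Nat.find_min hhit (hs.trans_lt ht)
    calc ⨅ t ∈ {t | ω ∈ S t}, (t : ℝ≥0∞)
        ≤ Nat.find hhit := iInf₂_le (Nat.find hhit) (Nat.find_spec hhit)
      _ = ∑ t ∈ range (Nat.find hhit), (survivalSet S t).indicator 1 ω := by
        rw [sum_congr rfl fun t ht => Set.indicator_of_mem (hsurv t (mem_range.mp ht)) _]
        simp
      _ ≤ ∑' t, (survivalSet S t).indicator 1 ω := ENNReal.sum_le_tsum _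
  · push Not at hhit
    have hsurv : ∀ t, ω ∈ survivalSet S t := fun t s _ => hhit s
    simp [Set.indicator_of_mem (hsurv _)]

lemma lintegral_iInf_hitting_le_tsum_measure {m0 : MeasurableSpace Ω} (μ : Measure Ω)
    {S : ℕ → Set Ω} (hS : ∀ t, MeasurableSet (survivalSet S t)) :
    ∫⁻ ω, ⨅ t ∈ {t | ω ∈ S t}, (t : ℝ≥0∞) ∂μ ≤ ∑' t, μ (survivalSet S t) :=
  calc ∫⁻ ω, ⨅ t ∈ {t | ω ∈ S t}, (t : ℝ≥0∞) ∂μ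
      ≤ ∫⁻ ω, ∑' t, (survivalSet S t).indicator 1 ω ∂μ :=
        lintegral_mono (iInf_hitting_le_tsum_indicator_survivalSet S)
    _ = ∑' t, μ (survivalSet S t) := by
      rw [lintegral_tsum fun t => (measurable_one.indicator (hS t)).aemeasurable]
      exact tsum_congr fun t => lintegral_indicator_one (hS t)

lemma sum_range_indicator_survivalSet_sub_eq (S : ℕ → Set Ω) (y : ℕ → Ω → ℝ)
    (hy : ∀ t ω, ω ∈ S t → y t ω = 0) (ω : Ω) (n : ℕ) :
    ∑ t ∈ range n, (survivalSet S t).indicator (fun ω => y t ω - y (t + 1) ω) ω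
      = y 0 ω - (survivalSet S n).indicator (y n) ω := by
  induction n with
  | zero =>
    by_cases h0 : ω ∈ S 0
    · simp [hy 0 ω h0]
    · simp [Set.indicator_of_mem (show ω ∈ survivalSet S 0 by simpa using h0)]
  | succ n ih =>
    rw [sum_range_succ, ih]
    by_cases hn : ω ∈ survivalSet S n
    · by_cases hn1 : ω ∈ S (n + 1)
      · have : ω ∉ survivalSet S (n + 1) := fun h => h (n + 1) le_rfl hn1
        simp [Set.indicator_of_mem hn, Set.indicator_of_notMem this, hy _ _ hn1]
      · have : ω ∈ survivalSet S (n + 1) := fun s hs => by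
          rcases Nat.of_le_succ hs with hs | rfl
          exacts [hn s hs, hn1]
        simp [Set.indicator_of_mem hn, Set.indicator_of_mem this]
    · have : ω ∉ survivalSet S (n + 1) := fun h => hn fun s hs => h s (hs.trans n.le_succ)
      simp [Set.indicator_of_notMem hn, Set.indicator_of_notMem this]

lemma sum_range_indicator_survivalSet_sub_le (S : ℕ → Set Ω) (y : ℕ → Ω → ℝ)
    (hy : ∀ t ω, ω ∈ S t → y t ω = 0) (hy_nonneg : ∀ t ω, 0 ≤ y t ω) (ω : Ω) (n : ℕ) :
    ∑ t ∈ range n, (survivalSet S t).indicator (fun ω => y t ω - y (t + 1) ω) ω ≤ y 0 ω := by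
  rw [sum_range_indicator_survivalSet_sub_eq S y hy]
  exact sub_le_self _ (Set.indicator_nonneg (fun ω _ => hy_nonneg n ω) ω)

section Drift

variable {m m0 : MeasurableSpace Ω} {μ : Measure Ω} {f : Ω → ℝ} {s : Set Ω} {α : ℝ}

/-- `μ[f|m]` is the junk value `0` for non-integrable `f`, so a positive drift bound can then only
hold on a null set. -/
lemma measure_eq_zero_of_le_condExp_of_not_integrable (hα : 0 < α) (hf : ¬Integrable f μ)
    (hdrift : ∀ᵐ ω ∂μ, ω ∈ s → α ≤ μ[f|m] ω) : μ s = 0 := by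
  rw [measure_eq_zero_iff_ae_notMem]
  filter_upwards [hdrift] with ω hω hs
  have := hω hs
  rw [condExp_of_not_integrable hf, Pi.zero_apply] at this
  linarith

lemma integrableOn_of_le_condExp (hα : 0 < α) (hdrift : ∀ᵐ ω ∂μ, ω ∈ s → α ≤ μ[f|m] ω) :
    IntegrableOn f s μ := by
  by_cases hf : Integrable f μ
  · exact hf.integrableOn
  · rw [IntegrableOn, Measure.restrict_eq_zero.mpr
      (measure_eq_zero_of_le_condExp_of_not_integrable hα hf hdrift)]
    exact integrable_zero_measure

lemma mul_measureReal_le_setIntegral_of_le_condExp (hm : m ≤ m0) [IsFiniteMeasure μ]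
    (hs : MeasurableSet[m] s) (hα : 0 < α) (hdrift : ∀ᵐ ω ∂μ, ω ∈ s → α ≤ μ[f|m] ω) :
    α * μ.real s ≤ ∫ ω in s, f ω ∂μ := by
  by_cases hf : Integrable f μ
  · rw [← setIntegral_condExp hm hf hs, mul_comm, ← smul_eq_mul, ← setIntegral_const]
    exact setIntegral_mono_on_ae (integrable_const α).integrableOn
      integrable_condExp.integrableOn (hm s hs) hdrift
  · have hs0 := measure_eq_zero_of_le_condExp_of_not_integrable hα hf hdrift
    simp [Measure.real, hs0, Measure.restrict_eq_zero.mpr hs0]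

lemma mul_sum_measureReal_le_of_le_condExp {ι : Type*} [Preorder ι] [IsProbabilityMeasure μ]
    (F : Filtration ι m0) {B : ι → Set Ω} {f : ι → Ω → ℝ} {I : Finset ι} {c : ℝ}
    (hB : ∀ i, MeasurableSet[F i] (B i)) (hα : 0 < α)
    (hdrift : ∀ i, ∀ᵐ ω ∂μ, ω ∈ B i → α ≤ μ[f i|F i] ω)
    (hsum : ∀ ω, ∑ i ∈ I, (B i).indicator (f i) ω ≤ c) :
    α * ∑ i ∈ I, μ.real (B i) ≤ c := by
  have hint : ∀ i, Integrable ((B i).indicator (f i)) μ := fun i =>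
    (integrable_indicator_iff (F.le i _ (hB i))).mpr (integrableOn_of_le_condExp hα (hdrift i))
  calc α * ∑ i ∈ I, μ.real (B i)
      ≤ ∑ i ∈ I, ∫ ω in B i, f i ω ∂μ := by
        rw [mul_sum]
        exact sum_le_sum fun i _ =>
          mul_measureReal_le_setIntegral_of_le_condExp (F.le i) (hB i) hα (hdrift i)
    _ = ∫ ω, ∑ i ∈ I, (B i).indicator (f i) ω ∂μ := by
        rw [integral_finsetSum I fun i _ => hint i]
        exact sum_congr rfl fun i _ => (integral_indicator (F.le i _ (hB i))).symm
    _ ≤ ∫ _, c ∂μ := integral_mono (integrable_finsetSum I fun i _ => hint i)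
        (integrable_const c) hsum
    _ = c := by simp

end Drift

lemma tsum_measure_le_ofReal_of_sum_range_measureReal_le {m0 : MeasurableSpace Ω}
    {μ : Measure Ω} [IsFiniteMeasure μ] {B : ℕ → Set Ω} {c : ℝ}
    (h : ∀ n, ∑ t ∈ range n, μ.real (B t) ≤ c) : ∑' t, μ (B t) ≤ ENNReal.ofReal c :=
  ENNReal.tsum_le_of_sum_range_le fun n => by
    simpa [ENNReal.ofReal_sum_of_nonneg, measureReal_nonneg] using ENNReal.ofReal_le_ofReal (h n)

end

theorem additive_drift_upper_bound_general {Ω : Type*} {m0 : MeasurableSpace Ω}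
    (μ : Measure Ω) [IsProbabilityMeasure μ]
    (F : Filtration ℕ m0)
    (xmin xmax : ℝ)
    (X : ℕ → Ω → ℝ) (hadapted : Adapted F X)
    (hstate : ∀ t ω, X t ω = 0 ∨ X t ω ∈ Set.Icc xmin xmax)
    (g : ℝ → ℝ) (hg0 : g 0 = 0) (hgpos : ∀ x ∈ Set.Icc xmin xmax, 0 < g x)
    (α : ℝ) (hα : 0 < α)
    (hdrift : ∀ t, ∀ᵐ ω ∂μ, xmin ≤ X t ω →
      α ≤ (μ[fun ω' => g (X t ω') - g (X (t + 1) ω') | F t]) ω)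
    (x0 : ℝ) (hX0 : ∀ ω, X 0 ω = x0) :
    ∫⁻ ω, (⨅ t ∈ {t : ℕ | X t ω = 0}, (t : ENNReal)) ∂μ
      ≤ ENNReal.ofReal (g x0 / α) := by
  set S : ℕ → Set Ω := fun t => {ω | X t ω = 0}
  have hS : ∀ t, MeasurableSet[F t] (survivalSet S t) :=
    measurableSet_survivalSet F fun t => hadapted t (measurableSet_singleton 0)
  have hg_nonneg : ∀ t ω, 0 ≤ g (X t ω) := fun t ω => by
    rcases hstate t ω with h | h
    · rw [h, hg0]
    · exact (hgpos _ h).le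
  have hdrift_survival : ∀ t, ∀ᵐ ω ∂μ, ω ∈ survivalSet S t →
      α ≤ (μ[fun ω' => g (X t ω') - g (X (t + 1) ω') | F t]) ω := fun t => by
    filter_upwards [hdrift t] with ω hω hsurv
    exact hω ((hstate t ω).resolve_left (hsurv t le_rfl)).1
  refine (lintegral_iInf_hitting_le_tsum_measure μ fun t => F.le t _ (hS t)).trans ?_
  refine tsum_measure_le_ofReal_of_sum_range_measureReal_le fun n => ?_
  rw [le_div_iff₀' hα]
  refine mul_sum_measureReal_le_of_le_condExp F hS hα hdrift_survival fun ω => ?_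
  simpa [hX0] using sum_range_indicator_survivalSet_sub_le S (fun t ω => g (X t ω))
    (fun t ω (h : X t ω = 0) => by rw [h, hg0]) hg_nonneg ω n

/-- Additive drift upper bound (part (i) of the general drift theorem of Lehre and
Witt): if `E[g(X_t) − g(X_{t+1}) | F_t] ≥ α` whenever `X_t ≥ x_min`, then the
hitting time `T_0 = min{t : X_t = 0}` satisfies `E[T_0 | X_0 = x0] ≤ g(x0)/α`. -/
theorem additive_drift_upper_bound {Ω : Type*} {m0 : MeasurableSpace Ω}
    (μ : Measure Ω) [IsProbabilityMeasure μ]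
    (F : Filtration ℕ m0)
    (xmin xmax : ℝ) (hxmin : 0 < xmin)
    (X : ℕ → Ω → ℝ) (hadapted : Adapted F X)
    (hstate : ∀ t ω, X t ω = 0 ∨ X t ω ∈ Set.Icc xmin xmax)
    (g : ℝ → ℝ) (hg0 : g 0 = 0) (hgpos : ∀ x ∈ Set.Icc xmin xmax, 0 < g x)
    (α : ℝ) (hα : 0 < α)
    (hdrift : ∀ t, ∀ᵐ ω ∂μ, xmin ≤ X t ω →
      α ≤ (μ[fun ω' => g (X t ω') - g (X (t + 1) ω') | F t]) ω)
    (x0 : ℝ) (hX0 : ∀ ω, X 0 ω = x0) :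
    ∫⁻ ω, (⨅ t ∈ {t : ℕ | X t ω = 0}, (t : ENNReal)) ∂μ
      ≤ ENNReal.ofReal (g x0 / α) :=
  additive_drift_upper_bound_general μ F xmin xmax X hadapted hstate g hg0 hgpos α hα hdrift x0 hX0
end
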